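/- arXiv:0909.0804 — 2 statements merged into one kernel-verified Lean document; each statement's English description precedes it below -/
import Mathlib

section
/- Let r ≥ 1 and suppose the polynomial z² + z + κ is irreducible over F := 𝔽_{2^r}. Let k = F((u)). Then the equation y² + (1/u)x² + x + κu = 0 has no solution x, y ∈ k. -/
/-!
Compare the coefficients of `u¹`. In characteristic 2 the off-diagonal terms of the Cauchy
product `f · f` cancel in pairs, so `y²` has no odd coefficients and the coefficient of `u²` in
`x²` is `x₁²`, where `xₙ` is the coefficient of `uⁿ` in `x`. Hence the coefficient of `u¹` in `y² + u⁻¹x² + x + κu` is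
`x₁² + x₁ + κ`, which cannot vanish.
-/

open Finset

theorem Finset.sum_mul_eq_sum_filter_fst_eq_snd {α R : Type*} [DecidableEq α] [CommSemiring R]
    [CharP R 2] {s : Finset (α × α)} (hs : ∀ p ∈ s, p.swap ∈ s) (g : α → R) :
    ∑ p ∈ s, g p.1 * g p.2 = ∑ p ∈ s with p.1 = p.2, g p.1 * g p.2 := by
  have off_diag : ∑ p ∈ s with ¬p.1 = p.2, g p.1 * g p.2 = 0 := by
    refine sum_involution (fun p _ => p.swap) (fun p _ => ?_) (fun p hp _ h => ?_)
      (fun p hp => ?_) (fun p _ => rfl)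
    · rw [Prod.fst_swap, Prod.snd_swap, mul_comm]
      exact CharTwo.add_self_eq_zero _
    · exact (mem_filter.mp hp).2 (congrArg Prod.snd h)
    · rw [mem_filter] at hp ⊢
      exact ⟨hs p hp.1, fun h => hp.2 h.symm⟩
  rw [← sum_filter_add_sum_filter_not s (fun p => p.1 = p.2), off_diag, add_zero]

theorem add_self_injective {Γ : Type*} [AddCommMonoid Γ] [LinearOrder Γ]
    [IsOrderedCancelAddMonoid Γ] : Function.Injective fun a : Γ => a + a :=
  StrictMono.injective fun _ _ h => add_lt_add h h

namespace HahnSeries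

variable {Γ R : Type*} [AddCommMonoid Γ] [LinearOrder Γ] [IsOrderedCancelAddMonoid Γ]
  [CommSemiring R] [CharP R 2]

theorem coeff_sq_eq_sum_diag (f : R⟦Γ⟧) (m : Γ) :
    (f ^ 2).coeff m = ∑ p ∈ antidiagonal f.isPWO_support f.isPWO_support m with p.1 = p.2,
      f.coeff p.1 * f.coeff p.2 := by
  rw [sq, coeff_mul]
  convert sum_mul_eq_sum_filter_fst_eq_snd (fun p hp => swap_mem_antidiagonal.mpr hp) f.coeff

theorem coeff_sq_eq_zero_of_forall_add_self_ne (f : R⟦Γ⟧) {m : Γ}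
    (hm : ∀ n, n + n ≠ m) : (f ^ 2).coeff m = 0 := by
  rw [coeff_sq_eq_sum_diag]
  refine sum_eq_zero fun p hp => ?_
  obtain ⟨hp, hdiag⟩ := mem_filter.mp hp
  exact absurd (hdiag ▸ (mem_antidiagonal.mp hp).2.2) (hm p.1)

theorem coeff_sq_add_self (f : R⟦Γ⟧) (n : Γ) :
    (f ^ 2).coeff (n + n) = f.coeff n ^ 2 := by
  rw [coeff_sq_eq_sum_diag, sq]
  refine sum_eq_single (n, n) (fun p hp hpn => absurd ?_ hpn) (fun hn => ?_)
  · obtain ⟨hp, hdiag⟩ := mem_filter.mp hp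
    have hpn : p.1 = n := add_self_injective (hdiag ▸ (mem_antidiagonal.mp hp).2.2)
    exact Prod.ext hpn (hdiag ▸ hpn)
  · have : f.coeff n = 0 := by
      by_contra hne
      exact hn (mem_filter.mpr ⟨mem_antidiagonal.mpr ⟨hne, hne, rfl⟩, rfl⟩)
    rw [this, zero_mul]

end HahnSeries

theorem LaurentSeries.coeff_one_sq_add_single_mul_sq_add_add_single {R : Type*} [CommSemiring R]
    [CharP R 2] (x y : LaurentSeries R) (κ : R) :
    (y ^ 2 + HahnSeries.single (-1) 1 * x ^ 2 + x + HahnSeries.single 1 κ).coeff 1 =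
      x.coeff 1 ^ 2 + x.coeff 1 + κ := by
  have hy : (y ^ 2).coeff 1 = 0 := y.coeff_sq_eq_zero_of_forall_add_self_ne fun n => by omega
  have hx : (HahnSeries.single (-1) (1 : R) * x ^ 2).coeff 1 = x.coeff 1 ^ 2 := by
    have := HahnSeries.coeff_single_mul_add (r := (1 : R)) (x := x ^ 2) (a := 1 + 1) (b := -1)
    rwa [show (1 + 1 + -1 : ℤ) = 1 by norm_num, one_mul, HahnSeries.coeff_sq_add_self] at this
  simp only [HahnSeries.coeff_add, hy, hx, HahnSeries.coeff_single_same, zero_add]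

theorem stmt4_general (r : ℕ) (κ : GaloisField 2 r)
    (hirr : ∀ z : GaloisField 2 r, z ^ 2 + z + κ ≠ 0) :
    ∀ x y : LaurentSeries (GaloisField 2 r),
      y ^ 2 + (HahnSeries.single (-1 : ℤ) (1 : GaloisField 2 r)) * x ^ 2 + x +
        (HahnSeries.single (1 : ℤ) κ) ≠ 0 := by
  intro x y h
  apply hirr (x.coeff 1)
  rw [← LaurentSeries.coeff_one_sq_add_single_mul_sq_add_add_single x y κ, h,
    HahnSeries.coeff_zero]

/-- Let `F = 𝔽_{2^r}` with `r ≥ 1`, let `κ ∈ F` be such that `z² + z + κ` is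
irreducible over `F` (i.e. has no root), and let `k = F((u))`. Then the equation
`y² + (1/u)x² + x + κu = 0` has no solution `x, y ∈ k`. Here `u` denotes the
Laurent series `single 1 1` and `1/u = single (-1) 1`, `κu = single 1 κ`. -/
theorem stmt4 (r : ℕ) (hr : 1 ≤ r) (κ : GaloisField 2 r)
    (hirr : ∀ z : GaloisField 2 r, z ^ 2 + z + κ ≠ 0) :
    ∀ x y : LaurentSeries (GaloisField 2 r),
      y ^ 2 + (HahnSeries.single (-1 : ℤ) (1 : GaloisField 2 r)) * x ^ 2 + x +
        (HahnSeries.single (1 : ℤ) κ) ≠ 0 :=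
  stmt4_general r κ hirr
end

section
/- Let k be a field, char(k) ≠ 2, and ρ, σ ∈ k* such that y² + ρx² + σ = 0 has no nonzero solution and -ρ is a non-square in k. Let K = Frac(k[x,y]/(y² + ρx² + σ)) and let D be the k-subalgebra of M₂(K) spanned by I₂, U, V, W as above. Then D is a 4-dimensional division algebra over k. -/
open Matrix in
private lemma stmt10_key {K : Type*} [Field K] (r s x y a b c d : K)
    (h : y ^ 2 + r * x ^ 2 + s = 0) :
    (a • (1 : Matrix (Fin 2) (Fin 2) K) + b • !![0, -r; 1, 0] + c • !![y, r * x; x, -y] +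
        d • !![-(r * x), r * y; y, r * x]) *
      (a • (1 : Matrix (Fin 2) (Fin 2) K) + (-b) • !![0, -r; 1, 0] +
        (-c) • !![y, r * x; x, -y] + (-d) • !![-(r * x), r * y; y, r * x]) =
      (a ^ 2 + r * b ^ 2 + s * (c ^ 2 + r * d ^ 2)) • 1 := by
  ext i j
  fin_cases i <;> fin_cases j <;>
    simp [Matrix.mul_apply, Fin.sum_univ_two, Matrix.one_apply, smul_eq_mul] <;>
    (first
      | ring1
      | linear_combination (-(c ^ 2 + r * d ^ 2)) * h)

open Matrix in
private lemma stmt10_UU {K : Type*} [Field K] (r : K) :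
    !![(0 : K), -r; 1, 0] * !![0, -r; 1, 0] = (-r) • 1 := by
  ext i j
  fin_cases i <;> fin_cases j <;>
    simp [Matrix.mul_apply, Fin.sum_univ_two, Matrix.one_apply, smul_eq_mul]

open Matrix in
private lemma stmt10_UV {K : Type*} [Field K] (r x y : K) :
    !![(0 : K), -r; 1, 0] * !![y, r * x; x, -y] = !![-(r * x), r * y; y, r * x] := by
  ext i j
  fin_cases i <;> fin_cases j <;>
    simp [Matrix.mul_apply, Fin.sum_univ_two] <;> ring1

open Matrix in
private lemma stmt10_UW {K : Type*} [Field K] (r x y : K) :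
    !![(0 : K), -r; 1, 0] * !![-(r * x), r * y; y, r * x] = (-r) • !![y, r * x; x, -y] := by
  ext i j
  fin_cases i <;> fin_cases j <;>
    simp [Matrix.mul_apply, Fin.sum_univ_two, smul_eq_mul] <;> ring1

open Matrix in
private lemma stmt10_VU {K : Type*} [Field K] (r x y : K) :
    !![y, r * x; x, -y] * !![(0 : K), -r; 1, 0] = (-1 : K) • !![-(r * x), r * y; y, r * x] := by
  ext i j
  fin_cases i <;> fin_cases j <;>
    simp [Matrix.mul_apply, Fin.sum_univ_two, smul_eq_mul] <;> ring1

open Matrix in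
private lemma stmt10_VV {K : Type*} [Field K] (r s x y : K)
    (h : y ^ 2 + r * x ^ 2 + s = 0) :
    !![y, r * x; x, -y] * !![y, r * x; x, -y] = (-s) • (1 : Matrix (Fin 2) (Fin 2) K) := by
  ext i j
  fin_cases i <;> fin_cases j <;>
    simp [Matrix.mul_apply, Fin.sum_univ_two, Matrix.one_apply, smul_eq_mul] <;>
    (first
      | ring1
      | linear_combination h)

open Matrix in
private lemma stmt10_VW {K : Type*} [Field K] (r s x y : K)
    (h : y ^ 2 + r * x ^ 2 + s = 0) :
    !![y, r * x; x, -y] * !![-(r * x), r * y; y, r * x] = s • !![(0 : K), -r; 1, 0] := by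
  ext i j
  fin_cases i <;> fin_cases j <;>
    simp [Matrix.mul_apply, Fin.sum_univ_two, smul_eq_mul] <;>
    (first
      | ring1
      | linear_combination h
      | linear_combination -h
      | linear_combination r * h
      | linear_combination (-r) * h)

open Matrix in
private lemma stmt10_WU {K : Type*} [Field K] (r x y : K) :
    !![-(r * x), r * y; y, r * x] * !![(0 : K), -r; 1, 0] = r • !![y, r * x; x, -y] := by
  ext i j
  fin_cases i <;> fin_cases j <;>
    simp [Matrix.mul_apply, Fin.sum_univ_two, smul_eq_mul] <;> ring1

open Matrix in
private lemma stmt10_WV {K : Type*} [Field K] (r s x y : K)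
    (h : y ^ 2 + r * x ^ 2 + s = 0) :
    !![-(r * x), r * y; y, r * x] * !![y, r * x; x, -y] = (-s) • !![(0 : K), -r; 1, 0] := by
  ext i j
  fin_cases i <;> fin_cases j <;>
    simp [Matrix.mul_apply, Fin.sum_univ_two, smul_eq_mul] <;>
    (first
      | ring1
      | linear_combination h
      | linear_combination -h
      | linear_combination r * h
      | linear_combination (-r) * h)

open Matrix in
private lemma stmt10_WW {K : Type*} [Field K] (r s x y : K)
    (h : y ^ 2 + r * x ^ 2 + s = 0) :
    !![-(r * x), r * y; y, r * x] * !![-(r * x), r * y; y, r * x] =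
      (-(r * s)) • (1 : Matrix (Fin 2) (Fin 2) K) := by
  ext i j
  fin_cases i <;> fin_cases j <;>
    simp [Matrix.mul_apply, Fin.sum_univ_two, Matrix.one_apply, smul_eq_mul] <;>
    (first
      | ring1
      | linear_combination r * h
      | linear_combination (-r) * h)

open Matrix in
/-- With notation as in the paper (`char k ≠ 2`, `-ρ` a non-square, the conic
`y² + ρx² + σ = 0` without `k`-rational points but with a point `(x,y)` in the
extension `K`), the `k`-span `D` of `I₂, U, V, W` inside `M₂(K)` is a 4-dimensional
division algebra over `k`: it is closed under multiplication, has `k`-dimension 4,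
and every nonzero element of `D` is invertible with inverse again in `D`. -/
theorem stmt10 {k K : Type*} [Field k] [Field K] [Algebra k K]
    (hchark : ringChar k ≠ 2) (ρ σ : k) (hρ : ρ ≠ 0) (hσ : σ ≠ 0)
    (hns : ∀ a : k, a ^ 2 ≠ -ρ)
    (hsol : ∀ x y : k, y ^ 2 + ρ * x ^ 2 + σ ≠ 0)
    (x y : K)
    (hconic : y ^ 2 + algebraMap k K ρ * x ^ 2 + algebraMap k K σ = 0) :
    let ρ' : K := algebraMap k K ρ
    let U : Matrix (Fin 2) (Fin 2) K := !![0, -ρ'; 1, 0]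
    let V : Matrix (Fin 2) (Fin 2) K := !![y, ρ' * x; x, -y]
    let W : Matrix (Fin 2) (Fin 2) K := !![-(ρ' * x), ρ' * y; y, ρ' * x]
    let D : Submodule k (Matrix (Fin 2) (Fin 2) K) :=
      Submodule.span k {(1 : Matrix (Fin 2) (Fin 2) K), U, V, W}
    (∀ A B : Matrix (Fin 2) (Fin 2) K, A ∈ D → B ∈ D → A * B ∈ D) ∧
    Module.finrank k D = 4 ∧
    (∀ A : Matrix (Fin 2) (Fin 2) K, A ∈ D → A ≠ 0 → IsUnit A ∧ A⁻¹ ∈ D) := by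
  intro ρ' U V W D
  have hinj : Function.Injective (algebraMap k K) := (algebraMap k K).injective
  have hsm : ∀ (c : k) (M : Matrix (Fin 2) (Fin 2) K),
      c • M = (algebraMap k K c) • M := fun c M => (algebraMap_smul K c M).symm
  -- anisotropy of the norm form over k
  have sq0 : ∀ a b : k, a ^ 2 + ρ * b ^ 2 = 0 → a = 0 ∧ b = 0 := by
    intro a b h
    rcases eq_or_ne b 0 with rfl | hb
    · refine ⟨?_, rfl⟩
      have h2 : a ^ 2 = 0 := by linear_combination h
      exact pow_eq_zero_iff (n := 2) (by norm_num) |>.mp h2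
    · exact absurd (show (a / b) ^ 2 = -ρ by field_simp; linear_combination h) (hns _)
  have aniso : ∀ α β γ δ : k, ¬(α = 0 ∧ β = 0 ∧ γ = 0 ∧ δ = 0) →
      α ^ 2 + ρ * β ^ 2 + σ * (γ ^ 2 + ρ * δ ^ 2) ≠ 0 := by
    intro α β γ δ hne h
    rcases eq_or_ne (γ ^ 2 + ρ * δ ^ 2) 0 with hc | hc
    · obtain ⟨rfl, rfl⟩ := sq0 γ δ hc
      obtain ⟨rfl, rfl⟩ := sq0 α β (by linear_combination h - σ * hc)
      exact hne ⟨rfl, rfl, rfl, rfl⟩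
    · refine hsol ((α * δ + β * γ) / (γ ^ 2 + ρ * δ ^ 2))
        ((α * γ - ρ * β * δ) / (γ ^ 2 + ρ * δ ^ 2)) ?_
      field_simp
      linear_combination (γ ^ 2 + ρ * δ ^ 2) * h
  -- the key multiplicative identity, with k-scalars
  have key : ∀ α β γ δ : k,
      (α • (1 : Matrix (Fin 2) (Fin 2) K) + β • U + γ • V + δ • W) *
        (α • 1 + (-β) • U + (-γ) • V + (-δ) • W) =
      (α ^ 2 + ρ * β ^ 2 + σ * (γ ^ 2 + ρ * δ ^ 2)) • 1 := by
    intro α β γ δ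
    simp only [hsm, map_neg, map_add, _root_.map_mul, _root_.map_pow]
    exact stmt10_key (algebraMap k K ρ) (algebraMap k K σ) x y
      (algebraMap k K α) (algebraMap k K β) (algebraMap k K γ) (algebraMap k K δ) hconic
  -- membership basics
  have hsubset : ({(1 : Matrix (Fin 2) (Fin 2) K), U, V, W} : Set _) ⊆ D :=
    Submodule.subset_span
  have hD1 : (1 : Matrix (Fin 2) (Fin 2) K) ∈ D := hsubset (by simp)
  have hDU : U ∈ D := hsubset (by simp)
  have hDV : V ∈ D := hsubset (by simp)
  have hDW : W ∈ D := hsubset (by simp)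
  have hmem : ∀ α β γ δ : k,
      α • (1 : Matrix (Fin 2) (Fin 2) K) + β • U + γ • V + δ • W ∈ D := fun α β γ δ =>
    add_mem (add_mem (add_mem (Submodule.smul_mem _ _ hD1) (Submodule.smul_mem _ _ hDU))
      (Submodule.smul_mem _ _ hDV)) (Submodule.smul_mem _ _ hDW)
  -- products of generators, with k-scalars
  have hUU : U * U = (-ρ) • (1 : Matrix (Fin 2) (Fin 2) K) := by
    rw [hsm, map_neg]; exact stmt10_UU _
  have hUV : U * V = W := stmt10_UV _ x y
  have hUW : U * W = (-ρ) • V := by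
    rw [hsm, map_neg]; exact stmt10_UW _ x y
  have hVU : V * U = (-1 : k) • W := by
    rw [hsm, map_neg, _root_.map_one]; exact stmt10_VU _ x y
  have hVV : V * V = (-σ) • (1 : Matrix (Fin 2) (Fin 2) K) := by
    rw [hsm, map_neg]; exact stmt10_VV _ _ x y hconic
  have hVW : V * W = σ • U := by
    rw [hsm]; exact stmt10_VW _ _ x y hconic
  have hWU : W * U = ρ • V := by
    rw [hsm]; exact stmt10_WU _ x y
  have hWV : W * V = (-σ) • U := by
    rw [hsm, map_neg]; exact stmt10_WV _ _ x y hconic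
  have hWW : W * W = (-(ρ * σ)) • (1 : Matrix (Fin 2) (Fin 2) K) := by
    rw [hsm, map_neg, _root_.map_mul]; exact stmt10_WW _ _ x y hconic
  have prodmem : ∀ P Q : Matrix (Fin 2) (Fin 2) K,
      P ∈ ({(1 : Matrix (Fin 2) (Fin 2) K), U, V, W} : Set _) →
      Q ∈ ({(1 : Matrix (Fin 2) (Fin 2) K), U, V, W} : Set _) → P * Q ∈ D := by
    intro P Q hP hQ
    simp only [Set.mem_insert_iff, Set.mem_singleton_iff] at hP hQ
    rcases hP with rfl | rfl | rfl | rfl <;> rcases hQ with rfl | rfl | rfl | rfl <;>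
      simp only [one_mul, mul_one, hUU, hUV, hUW, hVU, hVV, hVW, hWU, hWV, hWW] <;>
      (first
        | exact hD1
        | exact hDU
        | exact hDV
        | exact hDW
        | exact Submodule.smul_mem _ _ hD1
        | exact Submodule.smul_mem _ _ hDU
        | exact Submodule.smul_mem _ _ hDV
        | exact Submodule.smul_mem _ _ hDW)
  -- the generating set as a range
  have hset : ({(1 : Matrix (Fin 2) (Fin 2) K), U, V, W} : Set _) =
      Set.range ![(1 : Matrix (Fin 2) (Fin 2) K), U, V, W] := by
    ext A
    simp only [Set.mem_insert_iff, Set.mem_singleton_iff, Matrix.range_cons,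
      Matrix.range_empty, Set.union_empty, Set.union_singleton, Set.mem_union]
    tauto
  have hrep : ∀ A ∈ D, ∃ α β γ δ : k,
      A = α • (1 : Matrix (Fin 2) (Fin 2) K) + β • U + γ • V + δ • W := by
    intro A hA
    rw [show D = Submodule.span k (Set.range ![(1 : Matrix (Fin 2) (Fin 2) K), U, V, W]) by
      rw [← hset]] at hA
    obtain ⟨c, hc⟩ := (Submodule.mem_span_range_iff_exists_fun k).mp hA
    refine ⟨c 0, c 1, c 2, c 3, ?_⟩
    rw [← hc, Fin.sum_univ_four]
    simp
  refine ⟨?_, ?_, ?_⟩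
  · -- closure under multiplication
    intro A B hA hB
    induction hA using Submodule.span_induction generalizing B with
    | mem P hP =>
      induction hB using Submodule.span_induction with
      | mem Q hQ => exact prodmem P Q hP hQ
      | zero => simpa using Submodule.zero_mem D
      | add Q R _ _ h1 h2 => rw [mul_add]; exact add_mem h1 h2
      | smul c Q _ h => rw [mul_smul_comm]; exact Submodule.smul_mem _ _ h
    | zero => simpa using Submodule.zero_mem D
    | add P Q _ _ h1 h2 => rw [add_mul]; exact add_mem (h1 B hB) (h2 B hB)
    | smul c P _ h => rw [smul_mul_assoc]; exact Submodule.smul_mem _ _ (h B hB)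
  · -- finrank = 4
    have hli : LinearIndependent k ![(1 : Matrix (Fin 2) (Fin 2) K), U, V, W] := by
      rw [Fintype.linearIndependent_iff]
      intro g hg
      rw [Fin.sum_univ_four] at hg
      simp only [Matrix.cons_val_zero, Matrix.cons_val_one, Matrix.head_cons,
        Matrix.cons_val_two, Matrix.tail_cons, Matrix.cons_val_three] at hg
      have hall : g 0 = 0 ∧ g 1 = 0 ∧ g 2 = 0 ∧ g 3 = 0 := by
        by_contra hcoe
        have hd := aniso _ _ _ _ hcoe
        have hk := key (g 0) (g 1) (g 2) (g 3)
        rw [hg, zero_mul] at hk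
        have h00 := congrFun (congrFun hk.symm 0) 0
        rw [hsm] at h00
        simp only [Matrix.smul_apply, Matrix.one_apply_eq, smul_eq_mul, mul_one,
          Matrix.zero_apply] at h00
        exact hd (hinj (by rw [h00, map_zero]))
      intro i
      fin_cases i
      · exact hall.1
      · exact hall.2.1
      · exact hall.2.2.1
      · exact hall.2.2.2
    rw [show D = Submodule.span k (Set.range ![(1 : Matrix (Fin 2) (Fin 2) K), U, V, W]) by
      rw [← hset]]
    rw [finrank_span_eq_card hli]
    simp
  · -- invertibility
    intro A hA hA0
    obtain ⟨α, β, γ, δ, rfl⟩ := hrep A hA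
    have hcoe : ¬(α = 0 ∧ β = 0 ∧ γ = 0 ∧ δ = 0) := by
      rintro ⟨rfl, rfl, rfl, rfl⟩
      simp at hA0
    have hd : α ^ 2 + ρ * β ^ 2 + σ * (γ ^ 2 + ρ * δ ^ 2) ≠ 0 := aniso _ _ _ _ hcoe
    set Bc : Matrix (Fin 2) (Fin 2) K :=
      α • 1 + (-β) • U + (-γ) • V + (-δ) • W with hBc_def
    have hAB : (α • (1 : Matrix (Fin 2) (Fin 2) K) + β • U + γ • V + δ • W) *
        (((α ^ 2 + ρ * β ^ 2 + σ * (γ ^ 2 + ρ * δ ^ 2))⁻¹ : k) • Bc) = 1 := by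
      rw [mul_smul_comm, hBc_def, key, smul_smul, inv_mul_cancel₀ hd, one_smul]
    refine ⟨⟨⟨_, _, hAB, mul_eq_one_comm.mp hAB⟩, rfl⟩, ?_⟩
    rw [Matrix.inv_eq_right_inv hAB]
    exact Submodule.smul_mem _ _ (hmem α (-β) (-γ) (-δ))
end
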